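/- Let i = (i_1, …, i_m) be a word. Consider the set of elements (F^0, …, F^m) of BS^i in which every subspace F^k(a) (for 0 ≤ k ≤ m and 0 ≤ a ≤ n) is a coordinate subspace. Then the map from this set to the set of functions {1, …, m} → {true, false}, sending such a point to the function whose value at k is true if and only if F^k(i_k) = F^{k−1}(i_k), is a bijection. -/

import Mathlib

noncomputable section

/-- The coordinate subspace `span{e₁, …, e_k}` of `ℂⁿ` (standard basis `eᵢ = Pi.single i 1`). -/
def stdSub (n k : ℕ) : Submodule ℂ (Fin n → ℂ) :=
  Submodule.span ℂ {v : Fin n → ℂ | ∃ t : Fin n, (t : ℕ) < k ∧ v = Pi.single t 1}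

/-- A complete flag in `ℂⁿ`: a monotone function `{0,…,n} → Submodule ℂ ℂⁿ`
with `dim F(k) = k`. -/
def IsCompleteFlag (n : ℕ) (F : Fin (n + 1) → Submodule ℂ (Fin n → ℂ)) : Prop :=
  Monotone F ∧ ∀ k : Fin (n + 1), Module.finrank ℂ (F k) = (k : ℕ)

/-- The standard flag `E(k) = span{e₁, …, e_k}`. -/
def stdFlag (n : ℕ) : Fin (n + 1) → Submodule ℂ (Fin n → ℂ) := fun k => stdSub n (k : ℕ)

/-- Magyar's description of the Bott–Samelson set `BS^i` for a word `i = (i_1, …, i_m)`: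
sequences of complete flags `(F^0, …, F^m)` with `F^0 = E` the standard flag, and for each
`1 ≤ k ≤ m`, `F^k(a) = F^{k-1}(a)` for all `a ≠ i_k`.  (The word is indexed so that
`i ⟨k⟩` for `k : Fin m` is the letter `i_{k+1}`.) -/
def InBS (n m : ℕ) (i : Fin m → ℕ)
    (F : Fin (m + 1) → Fin (n + 1) → Submodule ℂ (Fin n → ℂ)) : Prop :=
  (∀ k, IsCompleteFlag n (F k)) ∧ F 0 = stdFlag n ∧
    ∀ k : Fin m, ∀ a : Fin (n + 1), (a : ℕ) ≠ i k → F k.succ a = F k.castSucc a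

/-- A coordinate subspace of `ℂⁿ`: the span of a subset of the standard basis vectors. -/
def IsCoordSub (n : ℕ) (W : Submodule ℂ (Fin n → ℂ)) : Prop :=
  ∃ S : Set (Fin n), W = Submodule.span ℂ ((fun t : Fin n => Pi.single t (1 : ℂ)) '' S)

/-!
A flag all of whose members are coordinate subspaces is the flag `a ↦ span {e_{w t} | t < a}` of
a permutation `w`. If `F^{k-1}` is such a flag, `F^k` differs from it only at level `I = i_k`,
where `F^k(I)` is a coordinate subspace of dimension `I` squeezed between `F^{k-1}(I-1)` and
`F^{k-1}(I+1)`. Only two coordinate subspaces fit there: `F^{k-1}(I)` itself and the `I`-th member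
of the flag of `w · (I-1 I)`. So each step is a binary choice, recorded by the boolean, and
induction along the word identifies every point with the one built from its booleans.
-/

open Equiv

theorem Pi.spanSubset_le_spanSubset_iff {R η : Type*} [Semiring R] [Nontrivial R] [Finite η]
    [DecidableEq η] {s t : Set η} : Pi.spanSubset R s ≤ Pi.spanSubset R t ↔ s ⊆ t := by
  refine ⟨fun h x hx => ?_, fun h => Submodule.span_mono (Set.image_mono h)⟩
  have hxs : Pi.basisFun R η x ∈ Pi.spanSubset R s :=
    (Pi.basisFun R η).self_mem_span_image.2 hx
  exact (Pi.basisFun R η).self_mem_span_image.1 (h hxs)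

theorem Pi.spanSubset_injective (R η : Type*) [Semiring R] [Nontrivial R] [Finite η]
    [DecidableEq η] : Function.Injective (Pi.spanSubset R : Set η → Submodule R (η → R)) :=
  fun _ _ h => (Pi.spanSubset_le_spanSubset_iff.1 h.le).antisymm
    (Pi.spanSubset_le_spanSubset_iff.1 h.ge)

theorem isCoordSub_iff {n : ℕ} {W : Submodule ℂ (Fin n → ℂ)} :
    IsCoordSub n W ↔ ∃ S, W = Pi.spanSubset ℂ S := by
  have : (fun t : Fin n => Pi.single t (1 : ℂ)) = Pi.basisFun ℂ (Fin n) :=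
    funext fun t => (Pi.basisFun_apply ℂ (Fin n) t).symm
  rw [IsCoordSub, this]
  rfl

theorem Set.eq_insert_of_subset_insert_insert {α : Type*} [Finite α] {A T : Set α} {x y : α}
    (hAT : A ⊆ T) (hT : T ⊆ insert y (insert x A)) (hcard : T.ncard = A.ncard + 1)
    (hne : T ≠ insert x A) : T = insert y A := by
  obtain ⟨z, hz⟩ : ∃ z, T \ A = {z} := by
    rw [← Set.ncard_eq_one, Set.ncard_sdiff hAT]
    omega
  have hTz : T = insert z A := by
    rw [Set.insert_eq, ← hz, Set.sdiff_union_of_subset hAT]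
  have hzT : z ∈ T \ A := hz ▸ rfl
  rcases hT hzT.1 with rfl | rfl | hzA
  · exact hTz
  · exact absurd hTz hne
  · exact absurd hzA hzT.2

theorem Fin.ncard_setOf_val_lt {n a : ℕ} (ha : a ≤ n) : {t : Fin n | (t : ℕ) < a}.ncard = a := by
  rw [← Finset.coe_filter_univ, Set.ncard_coe_finset, Fin.card_filter_val_lt]
  omega

theorem Fin.setOf_val_lt_eq_insert {n a b : ℕ} (ha : a < n) (hab : a + 1 = b) :
    {t : Fin n | (t : ℕ) < b} = insert ⟨a, ha⟩ {t : Fin n | (t : ℕ) < a} := by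
  ext u
  simp only [Set.mem_ofPred_eq, Set.mem_insert_iff, Fin.ext_iff]
  omega

section CoordFlag

variable {n : ℕ}

def coordFlag (w : Perm (Fin n)) (a : ℕ) : Submodule ℂ (Fin n → ℂ) :=
  Pi.spanSubset ℂ (w '' {t : Fin n | (t : ℕ) < a})

theorem finrank_coordFlag (w : Perm (Fin n)) {a : ℕ} (ha : a ≤ n) :
    Module.finrank ℂ (coordFlag w a) = a := by
  rw [coordFlag, Pi.dim_spanSubset, Set.ncard_image_of_injective _ w.injective,
    Fin.ncard_setOf_val_lt ha]

theorem isCompleteFlag_coordFlag (w : Perm (Fin n)) :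
    IsCompleteFlag n fun a => coordFlag w a :=
  ⟨fun _ _ hab => Pi.spanSubset_le_spanSubset_iff.2 <|
      Set.image_mono fun _ ht => Nat.lt_of_lt_of_le ht hab,
    fun a => finrank_coordFlag w (Nat.lt_succ_iff.1 a.isLt)⟩

theorem coordFlag_one : (fun a : Fin (n + 1) => coordFlag 1 a) = stdFlag n := by
  funext a
  rw [coordFlag, Pi.spanSubset, stdFlag, stdSub, Perm.coe_one, Set.image_id]
  congr 1
  ext v
  simp [Pi.basisFun_apply, eq_comm]

theorem coordFlag_mul (w s : Perm (Fin n)) (a : ℕ) :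
    coordFlag (w * s) a = Pi.spanSubset ℂ (w '' (s '' {t : Fin n | (t : ℕ) < a})) := by
  rw [coordFlag, Perm.coe_mul, Set.image_comp]

/-- Moves only the `I`-th member of a coordinate flag. -/
def adjSwap (I : ℕ) (hI : I < n) : Perm (Fin n) := swap ⟨I - 1, by omega⟩ ⟨I, hI⟩

variable {I : ℕ} {hI : I < n}

theorem adjSwap_image_setOf_lt_of_ne (hI0 : 0 < I) {a : ℕ} (ha : a ≠ I) :
    adjSwap I hI '' {t : Fin n | (t : ℕ) < a} = {t : Fin n | (t : ℕ) < a} := by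
  ext u
  rw [adjSwap, Set.mem_image_equiv, symm_swap, Set.mem_ofPred_eq, Set.mem_ofPred_eq,
    swap_apply_def]
  split_ifs <;> simp_all [Fin.ext_iff] <;> omega

theorem adjSwap_image_setOf_lt_self (hI0 : 0 < I) :
    adjSwap I hI '' {t : Fin n | (t : ℕ) < I} = insert ⟨I, hI⟩ {t : Fin n | (t : ℕ) < I - 1} := by
  ext u
  rw [adjSwap, Set.mem_image_equiv, symm_swap, Set.mem_insert_iff, Set.mem_ofPred_eq,
    Set.mem_ofPred_eq, swap_apply_def]
  split_ifs <;> simp_all [Fin.ext_iff] <;> omega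

theorem coordFlag_mul_adjSwap_of_ne (w : Perm (Fin n)) (hI0 : 0 < I) {a : ℕ} (ha : a ≠ I) :
    coordFlag (w * adjSwap I hI) a = coordFlag w a := by
  rw [coordFlag_mul, adjSwap_image_setOf_lt_of_ne hI0 ha, coordFlag]

theorem coordFlag_mul_adjSwap_self (w : Perm (Fin n)) (hI0 : 0 < I) :
    coordFlag (w * adjSwap I hI) I =
      Pi.spanSubset ℂ (insert (w ⟨I, hI⟩) (w '' {t : Fin n | (t : ℕ) < I - 1})) := by
  rw [coordFlag_mul, adjSwap_image_setOf_lt_self hI0, Set.image_insert_eq]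

theorem coordFlag_eq_insert (w : Perm (Fin n)) {a b : ℕ} (ha : a < n) (hab : a + 1 = b) :
    coordFlag w b = Pi.spanSubset ℂ (insert (w ⟨a, ha⟩) (w '' {t : Fin n | (t : ℕ) < a})) := by
  rw [coordFlag, Fin.setOf_val_lt_eq_insert ha hab, Set.image_insert_eq]

theorem coordFlag_mul_adjSwap_self_ne (w : Perm (Fin n)) (hI0 : 0 < I) :
    coordFlag (w * adjSwap I hI) I ≠ coordFlag w I := by
  rw [coordFlag_mul_adjSwap_self w hI0,
    coordFlag_eq_insert w (by omega) (by omega : I - 1 + 1 = I)]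
  intro h
  have hmem := Pi.spanSubset_injective ℂ (Fin n) h ▸ Set.mem_insert (w ⟨I, hI⟩) _
  simp [w.injective.eq_iff, Fin.ext_iff] at hmem
  omega

theorem eq_coordFlag_mul_adjSwap {w : Perm (Fin n)} (hI0 : 0 < I)
    {G : Fin (n + 1) → Submodule ℂ (Fin n → ℂ)} (hG : IsCompleteFlag n G)
    (hGI : IsCoordSub n (G ⟨I, by omega⟩))
    (hoff : ∀ a : Fin (n + 1), (a : ℕ) ≠ I → G a = coordFlag w a)
    (hne : G ⟨I, by omega⟩ ≠ coordFlag w I) :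
    G = fun a : Fin (n + 1) => coordFlag (w * adjSwap I hI) a := by
  funext a
  by_cases ha : (a : ℕ) = I
  swap
  · rw [hoff a ha, coordFlag_mul_adjSwap_of_ne w hI0 ha]
  rw [show a = ⟨I, by omega⟩ from Fin.ext ha]
  obtain ⟨T, hT⟩ := isCoordSub_iff.1 hGI
  set A := w '' {t : Fin n | (t : ℕ) < I - 1}
  have hlo : G ⟨I - 1, by omega⟩ ≤ G ⟨I, by omega⟩ := hG.1 (Fin.mk_le_mk.2 (by omega))
  have hhi : G ⟨I, by omega⟩ ≤ G ⟨I + 1, by omega⟩ := hG.1 (Fin.mk_le_mk.2 (by omega))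
  rw [hoff ⟨I - 1, by omega⟩ (by simp only; omega), hT] at hlo
  rw [hoff ⟨I + 1, by omega⟩ (by simp only; omega), hT, coordFlag_eq_insert w hI rfl,
    Fin.setOf_val_lt_eq_insert (by omega : I - 1 < n) (by omega : I - 1 + 1 = I),
    Set.image_insert_eq] at hhi
  have hcard : T.ncard = A.ncard + 1 := by
    have hdim := hG.2 ⟨I, by omega⟩
    rw [hT, Pi.dim_spanSubset] at hdim
    rw [Set.ncard_image_of_injective _ w.injective, Fin.ncard_setOf_val_lt (by omega)]
    simp only at hdim
    omega
  rw [hT, coordFlag_eq_insert w (by omega) (by omega : I - 1 + 1 = I)] at hne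
  rw [hT, coordFlag_mul_adjSwap_self w hI0]
  exact congrArg _ <| Set.eq_insert_of_subset_insert_insert
    (Pi.spanSubset_le_spanSubset_iff.1 hlo) (Pi.spanSubset_le_spanSubset_iff.1 hhi) hcard
    fun h => hne (congrArg _ h)

end CoordFlag

section BottSamelson

variable {n m : ℕ} {i : Fin m → ℕ} (hi : ∀ k, i k < n) (b : Fin m → Bool)

def bsPerm : Fin (m + 1) → Perm (Fin n) :=
  Fin.induction 1 fun k w => if b k then w else w * adjSwap (i k) (hi k)

def bsFlag (k : Fin (m + 1)) (a : Fin (n + 1)) : Submodule ℂ (Fin n → ℂ) :=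
  coordFlag (bsPerm hi b k) a

theorem bsPerm_zero : bsPerm hi b 0 = 1 := Fin.induction_zero _ _

theorem bsPerm_succ (k : Fin m) : bsPerm hi b k.succ =
    if b k then bsPerm hi b k.castSucc else bsPerm hi b k.castSucc * adjSwap (i k) (hi k) :=
  Fin.induction_succ _ _ k

variable {hi}

theorem bsFlag_mem (hpos : ∀ k, 0 < i k) :
    InBS n m i (bsFlag hi b) ∧ ∀ k a, IsCoordSub n (bsFlag hi b k a) := by
  refine ⟨⟨fun k => isCompleteFlag_coordFlag _, ?_, fun k a ha => ?_⟩,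
    fun k a => isCoordSub_iff.2 ⟨_, rfl⟩⟩
  · rw [← coordFlag_one, ← bsPerm_zero hi b]
    rfl
  · simp only [bsFlag, bsPerm_succ]
    split
    · rfl
    · exact coordFlag_mul_adjSwap_of_ne _ (hpos k) ha

theorem bsFlag_succ_eq_castSucc_iff (hpos : ∀ k, 0 < i k) (k : Fin m) :
    bsFlag hi b k.succ ⟨i k, by have := hi k; omega⟩ =
      bsFlag hi b k.castSucc ⟨i k, by have := hi k; omega⟩ ↔ b k = true := by
  simp only [bsFlag, bsPerm_succ]
  split
  case isTrue hbk => simpa using hbk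
  case isFalse hbk => simpa [hbk] using coordFlag_mul_adjSwap_self_ne _ (hpos k)

theorem eq_bsFlag (hpos : ∀ k, 0 < i k) {F : Fin (m + 1) → Fin (n + 1) → Submodule ℂ (Fin n → ℂ)}
    (hF : InBS n m i F) (hC : ∀ k a, IsCoordSub n (F k a))
    (hb : ∀ k, F k.succ ⟨i k, by have := hi k; omega⟩ =
      F k.castSucc ⟨i k, by have := hi k; omega⟩ ↔ b k = true) :
    F = bsFlag hi b := by
  obtain ⟨hflag, hF0, hstep⟩ := hF
  funext k
  induction k using Fin.induction with
  | zero => rw [hF0, ← coordFlag_one, ← bsPerm_zero hi b]; rfl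
  | succ k ih =>
    have hoff : ∀ a : Fin (n + 1), (a : ℕ) ≠ i k →
        F k.succ a = coordFlag (bsPerm hi b k.castSucc) a :=
      fun a ha => (hstep k a ha).trans (congrFun ih a)
    change F k.succ = fun a : Fin (n + 1) => coordFlag (bsPerm hi b k.succ) a
    rw [bsPerm_succ]
    split
    case isTrue hbk =>
      funext a
      by_cases ha : (a : ℕ) = i k
      · rw [show a = ⟨i k, by omega⟩ from Fin.ext ha, (hb k).2 hbk, ih]
        rfl
      · exact hoff a ha
    case isFalse hbk =>
      exact eq_coordFlag_mul_adjSwap (hpos k) (hflag _) (hC _ _) hoff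
        fun h => hbk ((hb k).1 (h.trans (congrFun ih ⟨i k, by have := hi k; omega⟩).symm))

end BottSamelson

/-- on the set of points of `BS^i` all of whose subspaces are coordinate
subspaces, the map sending such a point to the boolean function
`k ↦ (F^k(i_k) = F^{k-1}(i_k))` is a bijection onto all functions `{1,…,m} → Bool`. -/
theorem stmt2 (n m : ℕ) (i : Fin m → ℕ)
    (hi : ∀ t, 1 ≤ i t ∧ i t ≤ n - 1) :
    Set.BijOn
      (fun (F : Fin (m + 1) → Fin (n + 1) → Submodule ℂ (Fin n → ℂ)) (k : Fin m) =>
        @decide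
          (F k.succ ⟨i k, by have := (hi k).2; omega⟩ =
            F k.castSucc ⟨i k, by have := (hi k).2; omega⟩)
          (Classical.propDecidable _))
      {F | InBS n m i F ∧ ∀ k a, IsCoordSub n (F k a)}
      (Set.univ : Set (Fin m → Bool)) := by
  have hlt : ∀ k, i k < n := fun k => by have := hi k; omega
  have hpos : ∀ k, 0 < i k := fun k => (hi k).1
  refine ⟨fun _ _ => Set.mem_univ _, fun F hF G hG hFG => ?_, fun b _ => ?_⟩
  · rw [eq_bsFlag (hi := hlt) _ hpos hF.1 hF.2 fun k => decide_eq_true_iff.symm,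
      eq_bsFlag (hi := hlt) _ hpos hG.1 hG.2 fun k => decide_eq_true_iff.symm]
    exact congrArg _ hFG
  · refine ⟨bsFlag hlt b, bsFlag_mem b hpos, funext fun k => ?_⟩
    rw [Bool.eq_iff_iff, decide_eq_true_iff]
    exact bsFlag_succ_eq_castSucc_iff b hpos k
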